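/- Let (X, Z) be a random pair in ℝ^d × ℝ with P(X = 0) = 0, where ℝ^d and ℝ^{d+1} carry norms ‖·‖ such that the canonical basis vectors have norm one and ‖(x, 0)‖ = ‖x‖ for all x ∈ ℝ^d. Suppose the conditional law of t⁻¹(X, Z) given ‖X‖ > t converges weakly, as t → ∞, to a probability distribution P̃_∞ supported on {(x, z) : ‖x‖ > 1}, and that |Z| ≤ M ‖X‖ almost surely for some M > 0. Then P̃_∞ is supported on the truncated cone {(x, z) : ‖x‖ > 1, |z| ≤ M‖x‖}, and the conditional law of t⁻¹(X, Z) given ‖(X, Z)‖ > t converges weakly, as t → ∞, to a probability distribution Π_∞ supported on the truncated cone {(x, z) : ‖(x, z)‖ > 1, |z| ≤ M‖x‖}. -/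

import Mathlib

/-!
Write `Y = (X, Z)`. The rescaled conditional laws of `t⁻¹ Y` give no mass to the open cone
`{|z| > M‖x‖}`, hence neither does their weak limit `P̃_∞` (portmanteau). Conditioning the
convergence on the continuity set `{‖x‖ > s}` and rescaling shows that `P̃_∞` is self-similar:
its image under `q ↦ s q` is `P̃_∞` conditioned on `{‖x‖ > s}`; iterating, `P̃_∞` charges every
tail `{‖x‖ > r}`.

On the cone `‖(x, z)‖ ≤ C ‖x‖`, so `{‖Y‖ > t}` lies a.s. inside `{‖X‖ > t / C}`: the law of
`t⁻¹ Y` given `‖Y‖ > t` is the law of `(t / C)⁻¹ Y` given `‖X‖ > t / C`, pushed forward by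
`C⁻¹` and conditioned on `{‖q‖ > 1}`. For `C` with `P̃_∞ {‖q‖ = C} = 0` this is a continuity
set, so conditioning passes to the limit, and the tail bound `P̃_∞ {‖q‖ > C} > 0` makes the limit
`Π_∞ = (C⁻¹ •)_* P̃_∞ [· | ‖q‖ > 1]` a probability measure.
-/

open MeasureTheory ProbabilityTheory Filter Set
open scoped ENNReal Topology

/-- Weak convergence, as `t → ∞`, of a family of (finite) measures to a limit measure,
tested against bounded continuous functions. -/
def TendstoWeakly {E : Type*} [MeasurableSpace E] [TopologicalSpace E]
    (μ : ℝ → Measure E) (ν : Measure E) : Prop :=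
  ∀ f : BoundedContinuousFunction E ℝ,
    Filter.Tendsto (fun t => ∫ x, f x ∂(μ t)) Filter.atTop (𝓝 (∫ x, f x ∂ν))

/-- `N` is a norm function on the real vector space `E`. -/
def IsNormFun {E : Type*} [AddCommGroup E] [Module ℝ E] (N : E → ℝ) : Prop :=
  (∀ x y, N (x + y) ≤ N x + N y) ∧ (∀ (c : ℝ) x, N (c • x) = |c| * N x) ∧
    (∀ x, x ≠ 0 → 0 < N x)

section IsNormFun

variable {U : Type*} [AddCommGroup U] [Module ℝ U] {N : U → ℝ}

lemma IsNormFun.map_zero (hN : IsNormFun N) : N 0 = 0 := by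
  simpa using hN.2.1 0 0

lemma IsNormFun.nonneg (hN : IsNormFun N) (u : U) : 0 ≤ N u := by
  rcases eq_or_ne u 0 with rfl | hu
  · exact hN.map_zero.ge
  · exact (hN.2.2 u hu).le

lemma IsNormFun.convexOn (hN : IsNormFun N) : ConvexOn ℝ univ N := by
  refine ⟨convex_univ, fun x _ y _ a b ha hb _ => ?_⟩
  calc N (a • x + b • y) ≤ N (a • x) + N (b • y) := hN.1 _ _
    _ = a * N x + b * N y := by rw [hN.2.1, hN.2.1, abs_of_nonneg ha, abs_of_nonneg hb]

lemma IsNormFun.le_mul_of_abs_le {N : U × ℝ → ℝ} (hN : IsNormFun N) {N' : U → ℝ}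
    (hN' : ∀ x, N (x, 0) = N' x) {M : ℝ} {x : U} {z : ℝ} (hz : |z| ≤ M * N' x) :
    N (x, z) ≤ (1 + M * N (0, 1)) * N' x := by
  calc N (x, z) = N ((x, 0) + z • (0, 1)) := by simp
    _ ≤ N' x + |z| * N (0, 1) := by rw [← hN.2.1, ← hN']; exact hN.1 _ _
    _ ≤ N' x + M * N' x * N (0, 1) := by have := hN.nonneg (0, 1); gcongr
    _ = (1 + M * N (0, 1)) * N' x := by ring

variable {V : Type*} [NormedAddCommGroup V] [NormedSpace ℝ V] {N : V → ℝ}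

lemma IsNormFun.continuous [FiniteDimensional ℝ V] (hN : IsNormFun N) : Continuous N :=
  hN.convexOn.locallyLipschitz.continuous

lemma IsNormFun.eq_norm_mul_inv_smul (hN : IsNormFun N) (v : V) :
    N v = ‖v‖ * N (‖v‖⁻¹ • v) := by
  rcases eq_or_ne v 0 with rfl | hv
  · simp [hN.map_zero]
  · rw [hN.2.1, abs_of_nonneg (inv_nonneg.2 (norm_nonneg v)), ← mul_assoc,
      mul_inv_cancel₀ (norm_ne_zero_iff.2 hv), one_mul]

lemma IsNormFun.exists_pos_mul_norm_le [FiniteDimensional ℝ V] (hN : IsNormFun N) :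
    ∃ c > 0, ∀ v, c * ‖v‖ ≤ N v := by
  obtain ⟨c, hc, hcN⟩ := (isCompact_sphere (0 : V) 1).exists_forall_le' hN.continuous.continuousOn
    (a := 0) fun v hv => hN.2.2 v (ne_zero_of_mem_unit_sphere ⟨v, hv⟩)
  refine ⟨c, hc, fun v => ?_⟩
  rcases eq_or_ne v 0 with rfl | hv
  · simp [hN.map_zero]
  · rw [hN.eq_norm_mul_inv_smul v, mul_comm]
    refine mul_le_mul_of_nonneg_left (hcN _ ?_) (norm_nonneg v)
    simp [norm_smul, inv_mul_cancel₀ (norm_ne_zero_iff.2 hv)]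

lemma IsNormFun.exists_le_mul_norm [FiniteDimensional ℝ V] (hN : IsNormFun N) :
    ∃ C > 0, ∀ v, N v ≤ C * ‖v‖ := by
  obtain ⟨C, hC⟩ := (isCompact_sphere (0 : V) 1).bddAbove_image hN.continuous.continuousOn
  refine ⟨max C 1, by positivity, fun v => ?_⟩
  rcases eq_or_ne v 0 with rfl | hv
  · simp [hN.map_zero]
  · rw [hN.eq_norm_mul_inv_smul v, mul_comm]
    refine mul_le_mul_of_nonneg_right ((hC ⟨_, ?_, rfl⟩).trans (le_max_left C 1)) (norm_nonneg v)
    simp [norm_smul, inv_mul_cancel₀ (norm_ne_zero_iff.2 hv)]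

lemma IsNormFun.exists_pos_mul_le_prod {W : Type*} [NormedAddCommGroup W] [NormedSpace ℝ W]
    [FiniteDimensional ℝ V] [FiniteDimensional ℝ W] {N' : V × W → ℝ}
    (hN : IsNormFun N) (hN' : IsNormFun N') : ∃ c > 0, ∀ x z, c * N x ≤ N' (x, z) := by
  obtain ⟨C, hC, hNC⟩ := hN.exists_le_mul_norm
  obtain ⟨c, hc, hcN'⟩ := hN'.exists_pos_mul_norm_le
  refine ⟨c / C, by positivity, fun x z => ?_⟩
  calc c / C * N x ≤ c / C * (C * ‖(x, z)‖) :=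
        mul_le_mul_of_nonneg_left ((hNC x).trans (by gcongr; exact norm_fst_le (x, z)))
          (by positivity)
    _ = c * ‖(x, z)‖ := by field_simp
    _ ≤ N' (x, z) := hcN' _

end IsNormFun

lemma frontier_inter_subset_union {X : Type*} [TopologicalSpace X] (A B : Set X) :
    frontier (A ∩ B) ⊆ frontier A ∪ A ∩ frontier B := by
  refine (frontier_inter_subset A B).trans (union_subset (fun x hx => Or.inl hx.1) ?_)
  rintro x ⟨hxA, hxB⟩
  rw [closure_eq_self_union_frontier] at hxA
  exact hxA.elim (fun h => Or.inr ⟨h, hxB⟩) Or.inl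

lemma frontier_setOf_lt_subset {X : Type*} [TopologicalSpace X] {f : X → ℝ} (hf : Continuous f)
    (r : ℝ) : frontier {x | r < f x} ⊆ {x | f x = r} :=
  fun _ hx => (frontier_lt_subset_eq continuous_const hf hx).symm

lemma exists_mem_Ioo_measure_setOf_eq_eq_zero {α : Type*} [MeasurableSpace α] (μ : Measure α)
    [SFinite μ] {f : α → ℝ} (hf : Measurable f) {a b : ℝ} (hab : a < b) :
    ∃ s ∈ Ioo a b, μ {x | f x = s} = 0 := by
  obtain ⟨s, hs, hsμ⟩ := ((Measure.countable_meas_level_set_pos (μ := μ) hf).dense_compl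
    ℝ).exists_mem_open isOpen_Ioo (nonempty_Ioo.2 hab)
  exact ⟨s, hsμ, by simpa using hs⟩

section Conditioning

variable {Ω : Type*} [MeasurableSpace Ω] {μ : Measure Ω}

lemma cond_map {V : Type*} [MeasurableSpace V] {g : Ω → V} (hg : Measurable g) {A : Set V}
    (hA : MeasurableSet A) : (μ.map g)[|A] = (μ[|g ⁻¹' A]).map g := by
  ext B hB
  rw [Measure.map_apply hg hB, cond_apply (hg hA), cond_apply hA, Measure.map_apply hg hA,
    Measure.map_apply hg (hA.inter hB), preimage_inter]

lemma cond_cond_eq_cond_of_ae_le [IsFiniteMeasure μ] {s t : Set Ω} (hs : MeasurableSet s)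
    (ht : MeasurableSet t) (hts : t ≤ᵐ[μ] s) : μ[|s][|t] = μ[|t] := by
  have hst : (s ∩ t : Set Ω) =ᵐ[μ] t := ae_eq_set.2
    ⟨by rw [sdiff_eq_empty.2 inter_subset_right, measure_empty],
      by rw [sdiff_inter_self_eq_sdiff]; exact ae_le_set.1 hts⟩
  rw [cond_cond_eq_cond_inter hs ht, ProbabilityTheory.cond, ProbabilityTheory.cond,
    measure_congr hst, Measure.restrict_congr_set hst]

end Conditioning

section TendstoWeakly

variable {E : Type*} [MeasurableSpace E] [TopologicalSpace E] {μ μ' : ℝ → Measure E}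
  {ν : Measure E}

lemma TendstoWeakly.comp_tendsto (h : TendstoWeakly μ ν) {g : ℝ → ℝ} (hg : Tendsto g atTop atTop) :
    TendstoWeakly (fun t => μ (g t)) ν :=
  fun f => (h f).comp hg

lemma TendstoWeakly.congr' (h : TendstoWeakly μ ν) (hμ : μ =ᶠ[atTop] μ') : TendstoWeakly μ' ν :=
  fun f => (h f).congr' (hμ.mono fun t ht => by rw [ht])

lemma TendstoWeakly.unique [HasOuterApproxClosed E] [BorelSpace E] {ν' : Measure E}
    [IsFiniteMeasure ν] [IsFiniteMeasure ν'] (h : TendstoWeakly μ ν) (h' : TendstoWeakly μ ν') :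
    ν = ν' :=
  ext_of_forall_integral_eq_of_IsFiniteMeasure fun f => tendsto_nhds_unique (h f) (h' f)

variable [OpensMeasurableSpace E]

lemma TendstoWeakly.map {F : Type*} [MeasurableSpace F] [TopologicalSpace F] [BorelSpace F]
    (h : TendstoWeakly μ ν) {φ : E → F} (hφ : Continuous φ) :
    TendstoWeakly (fun t => (μ t).map φ) (ν.map φ) := by
  intro f
  have hint : ∀ m : Measure E, ∫ y, f y ∂(m.map φ) = ∫ x, f.compContinuous ⟨φ, hφ⟩ x ∂m :=
    fun m => integral_map hφ.aemeasurable f.continuous.aestronglyMeasurable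
  simpa only [hint] using h (f.compContinuous ⟨φ, hφ⟩)

lemma tendstoWeakly_iff_tendsto {μ : ℝ → ProbabilityMeasure E} {ν : ProbabilityMeasure E} :
    TendstoWeakly (fun t => (μ t : Measure E)) ν ↔ Tendsto μ atTop (𝓝 ν) :=
  ProbabilityMeasure.tendsto_iff_forall_integral_tendsto.symm

variable [HasOuterApproxClosed E] [IsProbabilityMeasure ν]

lemma TendstoWeakly.measure_eq_zero_of_isOpen (hμ : ∀ t, IsProbabilityMeasure (μ t))
    (h : TendstoWeakly μ ν) {G : Set E} (hG : IsOpen G) (hμG : ∀ᶠ t in atTop, μ t G = 0) :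
    ν G = 0 := by
  have := ProbabilityMeasure.le_liminf_measure_open_of_tendsto
    (tendstoWeakly_iff_tendsto (μ := fun t => ⟨μ t, hμ t⟩) (ν := ⟨ν, ‹_›⟩)|>.1 h) hG
  simpa [liminf_congr hμG] using this

lemma TendstoWeakly.tendsto_measure_of_null_frontier (hμ : ∀ t, IsProbabilityMeasure (μ t))
    (h : TendstoWeakly μ ν) {A : Set E} (hA : ν (frontier A) = 0) :
    Tendsto (fun t => μ t A) atTop (𝓝 (ν A)) :=
  ProbabilityMeasure.tendsto_measure_of_null_frontier_of_tendsto'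
    (tendstoWeakly_iff_tendsto (μ := fun t => ⟨μ t, hμ t⟩) (ν := ⟨ν, ‹_›⟩)|>.1 h) hA

end TendstoWeakly

lemma TendstoWeakly.cond {E : Type*} [MeasurableSpace E] [TopologicalSpace E]
    [TopologicalSpace.PseudoMetrizableSpace E] [OpensMeasurableSpace E] {μ : ℝ → Measure E}
    {ν : Measure E} [IsProbabilityMeasure ν] (hμ : ∀ t, IsProbabilityMeasure (μ t))
    (h : TendstoWeakly μ ν) {A : Set E} (hA : MeasurableSet A) (hAfr : ν (frontier A) = 0)
    (hνA : ν A ≠ 0) : TendstoWeakly (fun t => (μ t)[|A]) (ν[|A]) := by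
  have hμA := h.tendsto_measure_of_null_frontier hμ hAfr
  -- `(μ t)[|A]` is a probability measure only once `μ t A ≠ 0`, which holds eventually.
  let κ : ℝ → Measure E := fun t => if μ t A = 0 then ν[|A] else (μ t)[|A]
  have hκ : ∀ t, IsProbabilityMeasure (κ t) := fun t => by
    by_cases ht : μ t A = 0
    · simpa [κ, ht] using cond_isProbabilityMeasure hνA
    · simpa [κ, ht] using cond_isProbabilityMeasure ht
  have hκμ : κ =ᶠ[atTop] fun t => (μ t)[|A] :=
    (hμA.eventually_ne hνA).mono fun t ht => by simp [κ, ht]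
  refine TendstoWeakly.congr' ?_ hκμ
  have : IsProbabilityMeasure (ν[|A]) := cond_isProbabilityMeasure hνA
  refine (tendstoWeakly_iff_tendsto (μ := fun t => ⟨κ t, hκ t⟩) (ν := ⟨ν[|A], ‹_›⟩)).2
    (tendsto_of_forall_isOpen_le_liminf' fun G hG => ?_)
  show ν[|A] G ≤ atTop.liminf fun t => κ t G
  have := hκ
  -- Portmanteau: test on `ν[|A]`-continuity sets `B`; then `A ∩ B` is a `ν`-continuity set.
  refine le_liminf_measure_open_of_forall_tendsto_measure (μs := κ) (fun {B} hB hBfr => ?_) G hG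
  have hABfr : ν (frontier (A ∩ B)) = 0 := by
    rw [cond_apply hA, mul_eq_zero, ENNReal.inv_eq_zero] at hBfr
    exact measure_mono_null (frontier_inter_subset_union A B)
      (measure_union_null hAfr (hBfr.resolve_left (measure_ne_top ν A)))
  have hlim := ENNReal.Tendsto.mul (tendsto_inv_iff.2 hμA)
    (.inl (ENNReal.inv_ne_zero.2 (measure_ne_top ν A)))
    (h.tendsto_measure_of_null_frontier hμ hABfr) (.inr (ENNReal.inv_ne_top.2 hνA))
  rw [cond_apply hA]
  refine hlim.congr' ((hμA.eventually_ne hνA).mono fun t ht => ?_)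
  simp [κ, ht, cond_apply hA]

section Homogeneous

variable {V : Type*} [SMul ℝ V] {N : V → ℝ}

lemma preimage_smul_setOf_lt (hN : ∀ (c : ℝ) v, N (c • v) = |c| * N v) {c : ℝ} (hc : 0 < c)
    (r : ℝ) : (c • ·) ⁻¹' {v | r < N v} = {v | r / c < N v} := by
  ext v
  simp [hN, abs_of_pos hc, div_lt_iff₀' hc]

lemma preimage_smul_setOf_eq (hN : ∀ (c : ℝ) v, N (c • v) = |c| * N v) {c : ℝ} (hc : 0 < c)
    (r : ℝ) : (c • ·) ⁻¹' {v | N v = r} = {v | N v = r / c} := by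
  ext v
  simp [hN, abs_of_pos hc, eq_div_iff hc.ne', mul_comm]

lemma preimage_smul_setOf_lt_setOf {f g : V → ℝ} (hf : ∀ (c : ℝ) v, f (c • v) = |c| * f v)
    (hg : ∀ (c : ℝ) v, g (c • v) = |c| * g v) {c : ℝ} (hc : 0 < c) :
    (c • ·) ⁻¹' {v | f v < g v} = {v | f v < g v} := by
  ext v
  simp [hf, hg, abs_of_pos hc, mul_lt_mul_iff_right₀ hc]

end Homogeneous

noncomputable def tailLaw {Ω V : Type*} [MeasurableSpace Ω] [MeasurableSpace V] [SMul ℝ V]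
    (P : Measure Ω) (Y : Ω → V) (N : V → ℝ) (t : ℝ) : Measure V :=
  (P[|Y ⁻¹' {v | t < N v}]).map fun ω => t⁻¹ • Y ω

section TailLaw

variable {V : Type*} [NormedAddCommGroup V] [NormedSpace ℝ V] [MeasurableSpace V] [BorelSpace V]
  {N : V → ℝ} {Ω : Type*} [MeasurableSpace Ω] {P : Measure Ω} {Y : Ω → V}

lemma tailLaw_apply_eq_zero (hY : Measurable Y) {G : Set V} (hG : MeasurableSet G)
    (hGcone : ∀ c : ℝ, 0 < c → (c • ·) ⁻¹' G = G) (hYG : P (Y ⁻¹' G) = 0) {t : ℝ} (ht : 0 < t) :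
    tailLaw P Y N t G = 0 := by
  rw [tailLaw, Measure.map_apply (f := fun ω => t⁻¹ • Y ω) (hY.const_smul t⁻¹) hG]
  exact cond_absolutelyContinuous (by rwa [← hGcone t⁻¹ (inv_pos.2 ht)] at hYG)

lemma TendstoWeakly.isProbabilityMeasure_tailLaw [IsProbabilityMeasure P] (hY : Measurable Y)
    {ν : Measure V} [IsProbabilityMeasure ν] (h : TendstoWeakly (tailLaw P Y N) ν) (t : ℝ) :
    IsProbabilityMeasure (tailLaw P Y N t) := by
  have hP : P (Y ⁻¹' {v | t < N v}) ≠ 0 := by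
    intro hP0
    have hzero : ∀ᶠ u in atTop, tailLaw P Y N u = 0 :=
      (eventually_ge_atTop t).mono fun u hu => by
        rw [tailLaw, cond_eq_zero_of_meas_eq_zero (s := Y ⁻¹' {v | u < N v})
          (measure_mono_null (fun ω hω => hu.trans_lt hω) hP0), Measure.map_zero]
    have := h (BoundedContinuousFunction.const V 1)
    simp only [BoundedContinuousFunction.const_apply, integral_const, smul_eq_mul, mul_one,
      probReal_univ] at this
    exact one_ne_zero (tendsto_nhds_unique this
      (tendsto_const_nhds.congr' (hzero.mono fun u hu => by simp [hu])))
  have := cond_isProbabilityMeasure hP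
  exact Measure.isProbabilityMeasure_map (hY.const_smul _).aemeasurable

lemma tailLaw_cond_setOf_lt [IsFiniteMeasure P] (hY : Measurable Y) (hNm : Measurable N)
    (hN : ∀ (c : ℝ) v, N (c • v) = |c| * N v) {s t : ℝ} (hs : 1 ≤ s) (ht : 0 < t) :
    (tailLaw P Y N t)[|{v | s < N v}] = (tailLaw P Y N (s * t)).map (s • ·) := by
  have hYs : ∀ c : ℝ, Measurable fun ω => c • Y ω := fun c => hY.const_smul c
  rw [tailLaw, tailLaw, cond_map (hYs _) (measurableSet_lt measurable_const hNm),
    Measure.map_map (measurable_const_smul s) (hYs _)]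
  have hpre : (fun ω => t⁻¹ • Y ω) ⁻¹' {v | s < N v} = Y ⁻¹' {v | s * t < N v} := by
    change Y ⁻¹' ((t⁻¹ • ·) ⁻¹' {v | s < N v}) = _
    rw [preimage_smul_setOf_lt hN (inv_pos.2 ht), div_inv_eq_mul]
  have hsub : Y ⁻¹' {v | s * t < N v} ⊆ Y ⁻¹' {v | t < N v} := fun ω hω =>
    (le_mul_of_one_le_left ht.le hs).trans_lt hω
  rw [hpre, cond_cond_eq_cond_of_ae_le (hY (measurableSet_lt measurable_const hNm))
    (hY (measurableSet_lt measurable_const hNm)) (ae_of_all _ hsub)]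
  congr 1
  ext ω
  rw [Function.comp_apply, smul_smul]
  congr 1
  field_simp

lemma tailLaw_eq_cond_map_tailLaw [IsFiniteMeasure P] (hY : Measurable Y) (hNm : Measurable N)
    (hN : ∀ (c : ℝ) v, N (c • v) = |c| * N v) {N' : V → ℝ} (hN'm : Measurable N') {C t : ℝ}
    (hC : 0 < C) (ht : 0 < t) (hle : ∀ᵐ ω ∂P, N (Y ω) ≤ C * N' (Y ω)) :
    tailLaw P Y N t = ((tailLaw P Y N' (t / C)).map (C⁻¹ • ·))[|{v | 1 < N v}] := by
  have hYs : ∀ c : ℝ, Measurable fun ω => c • Y ω := fun c => hY.const_smul c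
  have hcomp : (C⁻¹ • ·) ∘ (fun ω => (t / C)⁻¹ • Y ω) = fun ω => t⁻¹ • Y ω := by
    ext ω
    rw [Function.comp_apply, smul_smul]
    congr 1
    field_simp
  rw [tailLaw, tailLaw, Measure.map_map (measurable_const_smul _) (hYs _), hcomp,
    cond_map (hYs _) (measurableSet_lt measurable_const hNm)]
  have hpre : (fun ω => t⁻¹ • Y ω) ⁻¹' {v | 1 < N v} = Y ⁻¹' {v | t < N v} := by
    change Y ⁻¹' ((t⁻¹ • ·) ⁻¹' {v | 1 < N v}) = _
    rw [preimage_smul_setOf_lt hN (inv_pos.2 ht), div_inv_eq_mul, one_mul]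
  have hsub : Y ⁻¹' {v | t < N v} ≤ᵐ[P] Y ⁻¹' {v | t / C < N' v} :=
    hle.mono fun ω hω hωt => (div_lt_iff₀' hC).2 (lt_of_lt_of_le hωt hω)
  rw [hpre, cond_cond_eq_cond_of_ae_le (hY (measurableSet_lt measurable_const hN'm))
    (hY (measurableSet_lt measurable_const hNm)) hsub]

end TailLaw

section LimitLaw

variable {V : Type*} [NormedAddCommGroup V] [NormedSpace ℝ V] [MeasurableSpace V] [BorelSpace V]
  {N : V → ℝ} {ν : Measure V}

lemma map_inv_smul_apply_setOf_lt (hNm : Measurable N) (hN : ∀ (c : ℝ) v, N (c • v) = |c| * N v)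
    {c : ℝ} (hc : 0 < c) (r : ℝ) : ν.map (c⁻¹ • ·) {v | r < N v} = ν {v | c * r < N v} := by
  rw [Measure.map_apply (measurable_const_smul _) (measurableSet_lt measurable_const hNm),
    preimage_smul_setOf_lt hN (inv_pos.2 hc), div_inv_eq_mul, mul_comm]

lemma measure_setOf_lt_ne_zero_of_map_smul_eq_cond (hNm : Measurable N)
    (hN : ∀ (c : ℝ) v, N (c • v) = |c| * N v) {s : ℝ} (hs : 1 < s) (hνs : ν {v | s < N v} ≠ 0)
    (hscale : ν.map (s • ·) = ν[|{v | s < N v}]) (r : ℝ) : ν {v | r < N v} ≠ 0 := by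
  have hs0 : 0 < s := one_pos.trans hs
  have hpow : ∀ n : ℕ, ν {v | s ^ n < N v} ≠ 0 := by
    intro n
    induction n with
    | zero => exact fun h0 => hνs (measure_mono_null (fun v hv => (pow_zero s ▸ hs).trans hv) h0)
    | succ n ih =>
      intro h0
      have key : ν {v | s ^ n < N v} = ν[{v | s ^ (n + 1) < N v} | {v | s < N v}] := by
        rw [← hscale, Measure.map_apply (measurable_const_smul s)
          (measurableSet_lt measurable_const hNm), preimage_smul_setOf_lt hN hs0, pow_succ,
          mul_div_cancel_right₀ _ hs0.ne']
      exact ih (by rw [key, cond_apply (measurableSet_lt measurable_const hNm),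
        measure_inter_null_of_null_right _ h0, mul_zero])
  obtain ⟨n, hn⟩ := pow_unbounded_of_one_lt r hs
  exact fun h0 => hpow n (measure_mono_null (fun v hv => hn.trans hv) h0)

variable {Ω : Type*} [MeasurableSpace Ω] {P : Measure Ω} [IsProbabilityMeasure P] {Y : Ω → V}
  [IsProbabilityMeasure ν]

lemma measure_eq_zero_of_tendstoWeakly_tailLaw (hY : Measurable Y)
    (h : TendstoWeakly (tailLaw P Y N) ν) {G : Set V} (hG : IsOpen G)
    (hGcone : ∀ c : ℝ, 0 < c → (c • ·) ⁻¹' G = G) (hYG : P (Y ⁻¹' G) = 0) : ν G = 0 :=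
  h.measure_eq_zero_of_isOpen (h.isProbabilityMeasure_tailLaw hY) hG
    ((eventually_gt_atTop 0).mono fun _ ht =>
      tailLaw_apply_eq_zero hY hG.measurableSet hGcone hYG ht)

lemma map_smul_eq_cond_of_tendstoWeakly_tailLaw (hY : Measurable Y) (hNc : Continuous N)
    (hN : ∀ (c : ℝ) v, N (c • v) = |c| * N v) (h : TendstoWeakly (tailLaw P Y N) ν) {s : ℝ}
    (hs : 1 ≤ s) (hνs : ν {v | N v = s} = 0) (hνs' : ν {v | s < N v} ≠ 0) :
    ν.map (s • ·) = ν[|{v | s < N v}] := by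
  have hcond := h.cond (h.isProbabilityMeasure_tailLaw hY)
    (measurableSet_lt measurable_const hNc.measurable)
    (measure_mono_null (frontier_setOf_lt_subset hNc s) hνs) hνs'
  have hmap := (h.comp_tendsto (tendsto_id.const_mul_atTop (one_pos.trans_le hs))).map
    (continuous_const_smul s)
  refine (hmap.congr' ?_).unique hcond
  filter_upwards [eventually_gt_atTop 0] with t ht
  exact (tailLaw_cond_setOf_lt hY hNc.measurable hN hs ht).symm

lemma measure_setOf_lt_ne_zero_of_tendstoWeakly_tailLaw (hY : Measurable Y) (hNc : Continuous N)
    (hN : ∀ (c : ℝ) v, N (c • v) = |c| * N v) (h : TendstoWeakly (tailLaw P Y N) ν)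
    (hν : ν {v | ¬ 1 < N v} = 0) (r : ℝ) : ν {v | r < N v} ≠ 0 := by
  have hν1 : ν {v | 1 < N v} ≠ 0 := fun h0 => by
    simpa using (measure_union_null h0 hν : ν ({v | 1 < N v} ∪ {v | 1 < N v}ᶜ) = 0)
  obtain ⟨s₀, hs₀, hνs₀⟩ : ∃ s₀, 1 < s₀ ∧ ν {v | s₀ < N v} ≠ 0 := by
    by_contra! H
    refine hν1 (measure_mono_null (fun v (hv : 1 < N v) => ?_)
      (measure_iUnion_null fun n : ℕ => H (1 + 1 / (n + 1)) (by simp; positivity)))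
    obtain ⟨n, hn⟩ := exists_nat_one_div_lt (sub_pos.2 hv)
    exact mem_iUnion.2 ⟨n, show 1 + 1 / ((n : ℝ) + 1) < N v by linarith⟩
  obtain ⟨s, ⟨hs, hss₀⟩, hνs⟩ := exists_mem_Ioo_measure_setOf_eq_eq_zero ν hNc.measurable hs₀
  have hνs' : ν {v | s < N v} ≠ 0 := fun h0 =>
    hνs₀ (measure_mono_null (fun v (hv : s₀ < N v) => hss₀.trans hv) h0)
  exact measure_setOf_lt_ne_zero_of_map_smul_eq_cond hNc.measurable hN hs hνs'
    (map_smul_eq_cond_of_tendstoWeakly_tailLaw hY hNc hN h hs.le hνs hνs') r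

lemma tendstoWeakly_tailLaw_of_le (hY : Measurable Y) (hNc : Continuous N)
    (hN : ∀ (c : ℝ) v, N (c • v) = |c| * N v) {N' : V → ℝ} (hN'm : Measurable N')
    (h : TendstoWeakly (tailLaw P Y N') ν) {C : ℝ} (hC : 0 < C)
    (hle : ∀ᵐ ω ∂P, N (Y ω) ≤ C * N' (Y ω)) (hνC : ν {v | N v = C} = 0)
    (hνC' : ν {v | C < N v} ≠ 0) :
    TendstoWeakly (tailLaw P Y N) ((ν.map (C⁻¹ • ·))[|{v | 1 < N v}]) := by
  have hA : MeasurableSet {v | 1 < N v} := measurableSet_lt measurable_const hNc.measurable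
  have hμ : ∀ t, IsProbabilityMeasure ((tailLaw P Y N' (t / C)).map (C⁻¹ • ·)) := fun t =>
    have := h.isProbabilityMeasure_tailLaw hY (t / C)
    Measure.isProbabilityMeasure_map (measurable_const_smul _).aemeasurable
  have hmap := (h.comp_tendsto (tendsto_id.atTop_div_const hC)).map (continuous_const_smul C⁻¹)
  have hAfr : ν.map (C⁻¹ • ·) (frontier {v | 1 < N v}) = 0 := by
    refine measure_mono_null (frontier_setOf_lt_subset hNc 1) ?_
    rwa [Measure.map_apply (measurable_const_smul _)
      (measurableSet_eq_fun hNc.measurable measurable_const), preimage_smul_setOf_eq hN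
      (inv_pos.2 hC), div_inv_eq_mul, one_mul]
  have hνA : ν.map (C⁻¹ • ·) {v | 1 < N v} ≠ 0 := by
    rwa [map_inv_smul_apply_setOf_lt hNc.measurable hN hC, mul_one]
  have : IsProbabilityMeasure (ν.map (C⁻¹ • ·)) :=
    Measure.isProbabilityMeasure_map (measurable_const_smul _).aemeasurable
  refine (hmap.cond hμ hA hAfr hνA).congr' ?_
  filter_upwards [eventually_gt_atTop 0] with t ht
  exact (tailLaw_eq_cond_map_tailLaw hY hNc.measurable hN hN'm hC ht hle).symm

end LimitLaw

theorem conditioning_on_one_component_converse_general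
    {Ω : Type*} [MeasureSpace Ω] [IsProbabilityMeasure (ℙ : Measure Ω)] {d : ℕ}
    (X : Ω → (Fin d → ℝ)) (Z : Ω → ℝ)
    (hXmeas : Measurable X) (hZmeas : Measurable Z)
    (Nd : (Fin d → ℝ) → ℝ) (N1 : ((Fin d → ℝ) × ℝ) → ℝ)
    (hNd : IsNormFun Nd) (hN1 : IsNormFun N1)
    (hcompat : ∀ x, N1 (x, 0) = Nd x)
    (Ptilde : Measure ((Fin d → ℝ) × ℝ)) [IsProbabilityMeasure Ptilde]
    (hsupp : Ptilde {q | ¬ 1 < Nd q.1} = 0)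
    (hconv : TendstoWeakly
      (fun t => Measure.map (fun ω => t⁻¹ • (X ω, Z ω)) (ℙ[|{ω | t < Nd (X ω)}]))
      Ptilde)
    (M : ℝ) (hM : 0 < M)
    (hbound : ∀ᵐ ω ∂ℙ, |Z ω| ≤ M * Nd (X ω)) :
    Ptilde {q | ¬ (1 < Nd q.1 ∧ |q.2| ≤ M * Nd q.1)} = 0 ∧
    ∃ Pinf : Measure ((Fin d → ℝ) × ℝ), IsProbabilityMeasure Pinf ∧
      Pinf {q | ¬ (1 < N1 q ∧ |q.2| ≤ M * Nd q.1)} = 0 ∧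
      TendstoWeakly
        (fun t => Measure.map (fun ω => t⁻¹ • (X ω, Z ω)) (ℙ[|{ω | t < N1 (X ω, Z ω)}]))
        Pinf := by
  have hY : Measurable fun ω => (X ω, Z ω) := hXmeas.prodMk hZmeas
  have hNdc : Continuous fun q : (Fin d → ℝ) × ℝ => Nd q.1 := hNd.continuous.comp continuous_fst
  have hNd' : ∀ (c : ℝ) (q : (Fin d → ℝ) × ℝ), Nd (c • q).1 = |c| * Nd q.1 :=
    fun c q => hNd.2.1 c q.1
  have hconv' : TendstoWeakly (tailLaw ℙ (fun ω => (X ω, Z ω)) fun q => Nd q.1) Ptilde := hconv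
  set G : Set ((Fin d → ℝ) × ℝ) := {q | M * Nd q.1 < |q.2|}
  have hGopen : IsOpen G := isOpen_lt (continuous_const.mul hNdc) continuous_snd.abs
  have hGcone : ∀ c : ℝ, 0 < c → (c • ·) ⁻¹' G = G := fun c =>
    preimage_smul_setOf_lt_setOf (fun c q => by rw [hNd', mul_left_comm]) (fun c q => abs_mul c q.2)
  have hG : Ptilde G = 0 := measure_eq_zero_of_tendstoWeakly_tailLaw hY hconv' hGopen hGcone
    (measure_mono_null (fun ω hω => not_le.2 hω) (ae_iff.1 hbound))
  refine ⟨measure_mono_null (fun q hq => (not_and_or.1 hq).imp id not_le.1)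
    (measure_union_null hsupp hG), ?_⟩
  have hK : 0 < 1 + M * N1 (0, 1) := by have := hN1.nonneg (0, 1); positivity
  obtain ⟨C, ⟨hKC, -⟩, hνC⟩ := exists_mem_Ioo_measure_setOf_eq_eq_zero Ptilde
    hN1.continuous.measurable (lt_add_one (1 + M * N1 (0, 1)))
  have hC : 0 < C := hK.trans hKC
  have hle : ∀ᵐ ω ∂ℙ, N1 (X ω, Z ω) ≤ C * Nd (X ω) := hbound.mono fun ω hω =>
    (hN1.le_mul_of_abs_le hcompat hω).trans (mul_le_mul_of_nonneg_right hKC.le (hNd.nonneg _))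
  obtain ⟨c, hc, hcN⟩ := hNd.exists_pos_mul_le_prod hN1
  have htail := measure_setOf_lt_ne_zero_of_tendstoWeakly_tailLaw hY hNdc hNd' hconv' hsupp (C / c)
  have hνC' : Ptilde {q | C < N1 q} ≠ 0 := fun h0 =>
    htail (measure_mono_null (fun q hq => ((div_lt_iff₀' hc).1 hq).trans_le (hcN _ _)) h0)
  refine ⟨_, cond_isProbabilityMeasure (by
    rwa [map_inv_smul_apply_setOf_lt hN1.continuous.measurable hN1.2.1 hC, mul_one]), ?_,
    tendstoWeakly_tailLaw_of_le hY hN1.continuous hN1.2.1 hNdc.measurable hconv' hC hle hνC hνC'⟩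
  have hQG : Ptilde.map (C⁻¹ • ·) G = 0 := by
    rwa [Measure.map_apply (measurable_const_smul _) hGopen.measurableSet, hGcone _ (inv_pos.2 hC)]
  have hsub : {q | 1 < N1 q} ∩ {q | ¬(1 < N1 q ∧ |q.2| ≤ M * Nd q.1)} ⊆ G :=
    fun q ⟨hq1, hq⟩ => not_le.1 ((not_and_or.1 hq).resolve_left (not_not.2 hq1))
  rw [cond_apply (measurableSet_lt measurable_const hN1.continuous.measurable),
    measure_mono_null hsub hQG, mul_zero]

/-- **Conditioning on one component** (Lemma, part 2: converse).
If the conditional law of `t⁻¹(X,Z)` given `‖X‖ > t` converges weakly to `P̃_∞`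
supported on `{‖x‖ > 1}`, and `|Z| ≤ M ‖X‖` a.s., then `P̃_∞` is supported on the
truncated cone `{‖x‖ > 1, |z| ≤ M‖x‖}` and the conditional law of `t⁻¹(X,Z)` given
`‖(X,Z)‖ > t` converges weakly to a probability measure `Π_∞` supported on the
truncated cone `{‖(x,z)‖ > 1, |z| ≤ M‖x‖}`. -/
theorem conditioning_on_one_component_converse
    {Ω : Type*} [MeasureSpace Ω] [IsProbabilityMeasure (ℙ : Measure Ω)] {d : ℕ}
    (X : Ω → (Fin d → ℝ)) (Z : Ω → ℝ)
    (hXmeas : Measurable X) (hZmeas : Measurable Z)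
    (hX0 : ℙ {ω | X ω = 0} = 0)
    (Nd : (Fin d → ℝ) → ℝ) (N1 : ((Fin d → ℝ) × ℝ) → ℝ)
    (hNd : IsNormFun Nd) (hN1 : IsNormFun N1)
    (hbasis : ∀ i, Nd (Pi.single i 1) = 1) (hbasis1 : N1 (0, 1) = 1)
    (hcompat : ∀ x, N1 (x, 0) = Nd x)
    (Ptilde : Measure ((Fin d → ℝ) × ℝ)) [IsProbabilityMeasure Ptilde]
    (hsupp : Ptilde {q | ¬ 1 < Nd q.1} = 0)
    (hconv : TendstoWeakly
      (fun t => Measure.map (fun ω => t⁻¹ • (X ω, Z ω)) (ℙ[|{ω | t < Nd (X ω)}]))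
      Ptilde)
    (M : ℝ) (hM : 0 < M)
    (hbound : ∀ᵐ ω ∂ℙ, |Z ω| ≤ M * Nd (X ω)) :
    Ptilde {q | ¬ (1 < Nd q.1 ∧ |q.2| ≤ M * Nd q.1)} = 0 ∧
    ∃ Pinf : Measure ((Fin d → ℝ) × ℝ), IsProbabilityMeasure Pinf ∧
      Pinf {q | ¬ (1 < N1 q ∧ |q.2| ≤ M * Nd q.1)} = 0 ∧
      TendstoWeakly
        (fun t => Measure.map (fun ω => t⁻¹ • (X ω, Z ω)) (ℙ[|{ω | t < N1 (X ω, Z ω)}]))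
        Pinf :=
  conditioning_on_one_component_converse_general X Z hXmeas hZmeas Nd N1 hNd hN1 hcompat Ptilde
    hsupp hconv M hM hbound
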